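/- arXiv:1312.6350 — 7 statements merged into one kernel-verified Lean document; each statement's English description precedes it below -/
import Mathlib

section
/- Let Q ∈ ℝ^{K×K} be symmetric positive semidefinite, λ > 0, and let x̄ ∈ ℝ^K with x̄_i > 0 for all i and ∑ x̄_i = 1 be such that the matrix (I − (1/K)ee^T)(Q − (λ/4) X̄^{−3/2})(I − (1/K)ee^T) is positive semidefinite, where X̄ = Diag(x̄). Define L_i as the i-th diagonal entry of (I − (1/K)ee^T) Q (I − (1/K)ee^T). Then (K−1) K^{3/2} ≤ (4/λ) ∑_{i=1}^K L_i = (4/λ)[tr(Q) − (1/K) e^T Q e]. -/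
/-!
The centering matrix `P = I - (1/K) e eᵀ` is idempotent, so `tr (P A P) = tr A - (1/K) eᵀ A e` for
every `A`. Taking traces in the second-order condition therefore gives
`tr (P Q P) ≥ (λ/4) (1 - 1/K) ∑ x̄ᵢ^{-3/2}`, and Jensen's inequality for `t ↦ t^{5/2}`, with weights
`x̄ᵢ` at the points `1/x̄ᵢ`, gives `∑ x̄ᵢ^{-3/2} ≥ K^{5/2}`.
-/

open Matrix

section Centering

variable (n 𝕜 : Type*) [Fintype n] [DecidableEq n] [Field 𝕜]

def centeringMatrix : Matrix n n 𝕜 := 1 - (Fintype.card n : 𝕜)⁻¹ • Matrix.of fun _ _ => (1 : 𝕜)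

variable {n 𝕜}

theorem centeringMatrix_mul_self :
    centeringMatrix n 𝕜 * centeringMatrix n 𝕜 = centeringMatrix n 𝕜 := by
  have hJ : (Matrix.of fun _ _ => (1 : 𝕜) : Matrix n n 𝕜) * Matrix.of (fun _ _ => 1)
      = (Fintype.card n : 𝕜) • Matrix.of fun _ _ => 1 := by
    ext i j; simp [Matrix.mul_apply]
  by_cases hn : (Fintype.card n : 𝕜) = 0
  · simp [centeringMatrix, hn]
  · simp only [centeringMatrix, sub_mul, mul_sub, one_mul, mul_one, Matrix.smul_mul,
      Matrix.mul_smul, hJ, smul_smul, inv_mul_cancel₀ hn, mul_one]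
    abel

theorem trace_centeringMatrix_mul (A : Matrix n n 𝕜) :
    trace (centeringMatrix n 𝕜 * A) = trace A - (Fintype.card n : 𝕜)⁻¹ * (1 ⬝ᵥ A *ᵥ 1) := by
  have hJA : trace ((Matrix.of fun _ _ => (1 : 𝕜)) * A) = 1 ⬝ᵥ A *ᵥ 1 := by
    simp only [trace, diag, Matrix.mul_apply, of_apply, one_mul, mulVec, dotProduct,
      Pi.one_apply, mul_one]
    exact Finset.sum_comm (f := fun i j => A j i)
  rw [centeringMatrix, sub_mul, one_mul, Matrix.smul_mul, trace_sub, trace_smul, hJA, smul_eq_mul]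

theorem trace_centeringMatrix_mul_mul_centeringMatrix (A : Matrix n n 𝕜) :
    trace (centeringMatrix n 𝕜 * A * centeringMatrix n 𝕜)
      = trace A - (Fintype.card n : 𝕜)⁻¹ * (1 ⬝ᵥ A *ᵥ 1) := by
  rw [trace_mul_cycle, centeringMatrix_mul_self, trace_centeringMatrix_mul]

theorem trace_centeringMatrix_mul_diagonal_mul_centeringMatrix (d : n → 𝕜) :
    trace (centeringMatrix n 𝕜 * diagonal d * centeringMatrix n 𝕜)
      = (1 - (Fintype.card n : 𝕜)⁻¹) * ∑ i, d i := by
  simp only [trace_centeringMatrix_mul_mul_centeringMatrix, trace_diagonal, one_dotProduct,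
    mulVec_diagonal, Pi.one_apply, mul_one]
  ring

end Centering

theorem card_rpow_le_sum_rpow_one_sub {ι : Type*} [Fintype ι] {x : ι → ℝ} (hx : ∀ i, 0 < x i)
    (hsum : ∑ i, x i = 1) {p : ℝ} (hp : 1 ≤ p) :
    (Fintype.card ι : ℝ) ^ p ≤ ∑ i, x i ^ (1 - p) := by
  have h := Real.rpow_arith_mean_le_arith_mean_rpow (Finset.univ : Finset ι) x (fun i => (x i)⁻¹)
    (fun i _ => (hx i).le) hsum (fun i _ => inv_nonneg.2 (hx i).le) hp
  convert h using 1
  · simp [fun i => mul_inv_cancel₀ (hx i).ne']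
  · refine Finset.sum_congr rfl fun i _ => ?_
    rw [Real.inv_rpow (hx i).le, Real.rpow_sub (hx i), Real.rpow_one, div_eq_mul_inv]

theorem second_order_KKT_sparsity_bound_general (K : ℕ) (hK : 0 < K)
    (Q : Matrix (Fin K) (Fin K) ℝ)
    (lam : ℝ) (hlam : 0 < lam)
    (x : Fin K → ℝ) (hx : ∀ i, 0 < x i) (hsum : ∑ i, x i = 1)
    (P : Matrix (Fin K) (Fin K) ℝ)
    (hP : P = 1 - (K : ℝ)⁻¹ • Matrix.of (fun _ _ => 1))
    (hsoc : (P * (Q - (lam / 4) • Matrix.diagonal (fun i => (x i) ^ (-(3 : ℝ) / 2))) * P).PosSemidef)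
    (L : Fin K → ℝ) (hL : ∀ i, L i = (P * Q * P) i i)
    (e : Fin K → ℝ) (he : e = fun _ => 1) :
    ((K : ℝ) - 1) * (K : ℝ) ^ ((3 : ℝ) / 2) ≤ (4 / lam) * ∑ i, L i ∧
      (4 / lam) * ∑ i, L i = (4 / lam) * (Q.trace - (K : ℝ)⁻¹ * (e ⬝ᵥ Q *ᵥ e)) := by
  obtain rfl : P = centeringMatrix (Fin K) ℝ := by rw [hP, centeringMatrix, Fintype.card_fin]
  have hL_sum : ∑ i, L i = trace (centeringMatrix (Fin K) ℝ * Q * centeringMatrix (Fin K) ℝ) := by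
    simp [hL, trace]
  set d : Fin K → ℝ := fun i => x i ^ (-(3 : ℝ) / 2)
  have hd_sum : (K : ℝ) ^ ((5 : ℝ) / 2) ≤ ∑ i, d i := by
    have h := card_rpow_le_sum_rpow_one_sub hx hsum (p := 5 / 2) (by norm_num)
    norm_num at h
    simpa [d, neg_div] using h
  have hsoc_trace : lam / 4 * ((1 - (K : ℝ)⁻¹) * ∑ i, d i) ≤ ∑ i, L i := by
    have h := hsoc.trace_nonneg
    rw [mul_sub, sub_mul, trace_sub, Matrix.mul_smul, Matrix.smul_mul, trace_smul,
      trace_centeringMatrix_mul_diagonal_mul_centeringMatrix, Fintype.card_fin, smul_eq_mul] at h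
    linarith
  have hK' : (0 : ℝ) < K := Nat.cast_pos.2 hK
  refine ⟨?_, ?_⟩
  · calc ((K : ℝ) - 1) * (K : ℝ) ^ ((3 : ℝ) / 2)
        = (1 - (K : ℝ)⁻¹) * (K : ℝ) ^ ((5 : ℝ) / 2) := by
          rw [show (5 : ℝ) / 2 = 1 + 3 / 2 by norm_num, Real.rpow_add hK', Real.rpow_one]
          field_simp
      _ ≤ (1 - (K : ℝ)⁻¹) * ∑ i, d i := by
          gcongr
          exact sub_nonneg.2 (inv_le_one_of_one_le₀ (by exact_mod_cast hK))
      _ ≤ 4 / lam * ∑ i, L i := by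
          rw [div_mul_eq_mul_div, le_div_iff₀ hlam]
          linarith
  · rw [hL_sum, trace_centeringMatrix_mul_mul_centeringMatrix, Fintype.card_fin, he]
    rfl

theorem second_order_KKT_sparsity_bound (K : ℕ) (hK : 0 < K)
    (Q : Matrix (Fin K) (Fin K) ℝ) (hQsymm : Q.IsSymm) (hQpsd : Q.PosSemidef)
    (lam : ℝ) (hlam : 0 < lam)
    (x : Fin K → ℝ) (hx : ∀ i, 0 < x i) (hsum : ∑ i, x i = 1)
    (P : Matrix (Fin K) (Fin K) ℝ)
    (hP : P = 1 - (K : ℝ)⁻¹ • Matrix.of (fun _ _ => 1))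
    (hsoc : (P * (Q - (lam / 4) • Matrix.diagonal (fun i => (x i) ^ (-(3 : ℝ) / 2))) * P).PosSemidef)
    (L : Fin K → ℝ) (hL : ∀ i, L i = (P * Q * P) i i)
    (e : Fin K → ℝ) (he : e = fun _ => 1) :
    ((K : ℝ) - 1) * (K : ℝ) ^ ((3 : ℝ) / 2) ≤ (4 / lam) * ∑ i, L i ∧
      (4 / lam) * ∑ i, L i = (4 / lam) * (Q.trace - (K : ℝ)⁻¹ * (e ⬝ᵥ Q *ᵥ e)) :=
  second_order_KKT_sparsity_bound_general K hK Q lam hlam x hx hsum P hP hsoc L hL e he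
end

section
/- Under the hypotheses of the second-order KKT sparsity theorem, for each index i in the support: the i-th diagonal entry of the projected Hessian satisfies L_i − (λ/4)[ x̄_i^{−3/2}(1 − 2/K) + (1/K²) ∑_{j=1}^K x̄_j^{−3/2} ] ≥ 0, and consequently (λ/4) x̄_i^{−3/2} (1 − 1/K)² ≤ L_i. -/
/-!
With `P = 1 - c • J` (`J` the all-ones matrix), `P * Diag(v) * P` has `i`-th diagonal entry
`∑ⱼ (δᵢⱼ - c)² vⱼ = vᵢ (1 - 2c) + c² ∑ⱼ vⱼ`. The second-order condition makes the diagonal of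
`P Q P - (λ/4) P Diag(x^{-3/2}) P` nonnegative, which is the first claim; dropping the terms
`j ≠ i` of the sum (all nonnegative) leaves `vᵢ (1 - c)²`, which is the second.
-/

open Matrix

namespace Matrix

variable {n R : Type*} [DecidableEq n]

variable (n) in
/-- For `c = (card n)⁻¹` this is the orthogonal projection onto the vectors with zero sum. -/
def centering [Ring R] (c : R) : Matrix n n R :=
  1 - c • of fun _ _ => 1

theorem centering_apply [Ring R] (c : R) (i j : n) :
    centering n c i j = (if i = j then 1 else 0) - c := by
  simp [centering, one_apply]

variable [Fintype n]

theorem mul_diagonal_mul_apply [CommSemiring R] (A B : Matrix n n R) (v : n → R) (i k : n) :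
    (A * diagonal v * B) i k = ∑ j, A i j * v j * B j k := by
  simp only [mul_apply (M := A * diagonal v), mul_diagonal]

theorem centering_mul_diagonal_mul_centering_apply_self [CommRing R] (c : R) (v : n → R)
    (i : n) :
    (centering n c * diagonal v * centering n c) i i = v i * (1 - 2 * c) + c ^ 2 * ∑ j, v j := by
  have hterm : ∀ j, centering n c i j * v j * centering n c j i
      = (if i = j then v i * (1 - 2 * c) else 0) + c ^ 2 * v j := by
    intro j
    by_cases hij : i = j
    · subst hij
      simp only [centering_apply, if_true]
      ring
    · simp only [centering_apply, if_neg hij, if_neg (Ne.symm hij)]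
      ring
  rw [mul_diagonal_mul_apply, Finset.sum_congr rfl fun j _ => hterm j, Finset.sum_add_distrib,
    Finset.sum_ite_eq, if_pos (Finset.mem_univ i), Finset.mul_sum]

theorem mul_sq_le_centering_mul_diagonal_mul_centering_apply_self
    [CommRing R] [LinearOrder R] [IsStrictOrderedRing R] (c : R) {v : n → R} (hv : 0 ≤ v)
    (i : n) :
    v i * (1 - c) ^ 2 ≤ (centering n c * diagonal v * centering n c) i i := by
  have hvi : v i ≤ ∑ j, v j := Finset.single_le_sum (fun j _ => hv j) (Finset.mem_univ i)
  rw [centering_mul_diagonal_mul_centering_apply_self]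
  nlinarith [mul_le_mul_of_nonneg_left hvi (sq_nonneg c)]

end Matrix

theorem second_order_KKT_diagonal_bound_general (K : ℕ)
    (Q : Matrix (Fin K) (Fin K) ℝ)
    (lam : ℝ) (hlam : 0 < lam)
    (x : Fin K → ℝ) (hx : ∀ i, 0 < x i)
    (P : Matrix (Fin K) (Fin K) ℝ)
    (hP : P = 1 - (K : ℝ)⁻¹ • Matrix.of (fun _ _ => 1))
    (hsoc : (P * (Q - (lam / 4) • Matrix.diagonal (fun i => (x i) ^ (-(3 : ℝ) / 2))) * P).PosSemidef)
    (L : Fin K → ℝ) (hL : ∀ i, L i = (P * Q * P) i i) (i : Fin K) :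
    0 ≤ L i - (lam / 4) *
        ((x i) ^ (-(3 : ℝ) / 2) * (1 - 2 / K)
          + (1 / (K : ℝ) ^ 2) * ∑ j, (x j) ^ (-(3 : ℝ) / 2)) ∧
      (lam / 4) * (x i) ^ (-(3 : ℝ) / 2) * (1 - 1 / K) ^ 2 ≤ L i := by
  set v : Fin K → ℝ := fun j => (x j) ^ (-(3 : ℝ) / 2)
  have hv : 0 ≤ v := fun j => (Real.rpow_pos_of_pos (hx j) _).le
  have hPc : P = centering (Fin K) (K : ℝ)⁻¹ := hP
  have hsplit : (P * (Q - (lam / 4) • diagonal v) * P) i i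
      = L i - (lam / 4) * (P * diagonal v * P) i i := by
    rw [Matrix.mul_sub, Matrix.sub_mul, Matrix.mul_smul, Matrix.smul_mul, Matrix.sub_apply,
      Matrix.smul_apply, smul_eq_mul, hL]
  have hdiag : (P * diagonal v * P) i i = v i * (1 - 2 / K) + (1 / (K : ℝ) ^ 2) * ∑ j, v j := by
    rw [hPc, centering_mul_diagonal_mul_centering_apply_self]
    ring
  have hlower : v i * (1 - 1 / K) ^ 2 ≤ (P * diagonal v * P) i i := by
    rw [hPc, one_div]
    exact mul_sq_le_centering_mul_diagonal_mul_centering_apply_self _ hv i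
  have hfirst : 0 ≤ L i - (lam / 4) * (P * diagonal v * P) i i := hsplit ▸ hsoc.diag_nonneg
  refine ⟨hdiag ▸ hfirst, ?_⟩
  change lam / 4 * v i * (1 - 1 / K) ^ 2 ≤ L i
  linarith [mul_le_mul_of_nonneg_left hlower (by positivity : (0 : ℝ) ≤ lam / 4)]

theorem second_order_KKT_diagonal_bound (K : ℕ) (hK : 0 < K)
    (Q : Matrix (Fin K) (Fin K) ℝ) (hQsymm : Q.IsSymm)
    (lam : ℝ) (hlam : 0 < lam)
    (x : Fin K → ℝ) (hx : ∀ i, 0 < x i) (hsum : ∑ i, x i = 1)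
    (P : Matrix (Fin K) (Fin K) ℝ)
    (hP : P = 1 - (K : ℝ)⁻¹ • Matrix.of (fun _ _ => 1))
    (hsoc : (P * (Q - (lam / 4) • Matrix.diagonal (fun i => (x i) ^ (-(3 : ℝ) / 2))) * P).PosSemidef)
    (L : Fin K → ℝ) (hL : ∀ i, L i = (P * Q * P) i i) (i : Fin K) :
    0 ≤ L i - (lam / 4) *
        ((x i) ^ (-(3 : ℝ) / 2) * (1 - 2 / K)
          + (1 / (K : ℝ) ^ 2) * ∑ j, (x j) ^ (-(3 : ℝ) / 2)) ∧
      (lam / 4) * (x i) ^ (-(3 : ℝ) / 2) * (1 - 1 / K) ^ 2 ≤ L i :=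
  second_order_KKT_diagonal_bound_general K Q lam hlam x hx P hP hsoc L hL i
end

section
/- Under the hypotheses of the second-order KKT sparsity theorem with K ≥ 2, if L_i > 0 for all i in the support, then every nonzero entry satisfies x̄_i ≥ (λ(K−1)² / (4 L_i K²))^{2/3}. -/
open Matrix

/-!
Testing the positive semidefinite second-order matrix against the `i`-th basis vector gives
`(λ/4) (P Diag(x)^{-3/2} P)ᵢᵢ ≤ (P Q P)ᵢᵢ = Lᵢ`. The left-hand side is a sum of nonnegative
terms `(λ/4) xⱼ^{-3/2} Pᵢⱼ²`, of which the `j = i` term alone is `(λ/4) xᵢ^{-3/2} (1 - 1/K)²`;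
solving this for `xᵢ` gives the bound.
-/

section DiagonalEntries

variable {n : Type*} [Fintype n] [DecidableEq n]

theorem mul_diagonal_mul_transpose_apply_self (A : Matrix n n ℝ) (d : n → ℝ) (i : n) :
    (A * diagonal d * Aᵀ) i i = ∑ j, d j * A i j ^ 2 := by
  rw [mul_apply]
  simp_rw [mul_diagonal, transpose_apply]
  exact Finset.sum_congr rfl fun j _ => by ring

theorem le_mul_diagonal_mul_transpose_apply_self (A : Matrix n n ℝ) {d : n → ℝ}
    (hd : ∀ j, 0 ≤ d j) (i : n) : d i * A i i ^ 2 ≤ (A * diagonal d * Aᵀ) i i := by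
  rw [mul_diagonal_mul_transpose_apply_self]
  exact Finset.single_le_sum (f := fun j => d j * A i j ^ 2)
    (fun j _ => mul_nonneg (hd j) (sq_nonneg _)) (Finset.mem_univ i)

theorem le_mul_mul_transpose_apply_self_of_posSemidef_sub_smul_diagonal {A Q : Matrix n n ℝ}
    {c : ℝ} {d : n → ℝ} (hc : 0 ≤ c) (hd : ∀ j, 0 ≤ d j)
    (hM : (A * (Q - c • diagonal d) * Aᵀ).PosSemidef)
    (i : n) : c * (d i * A i i ^ 2) ≤ (A * Q * Aᵀ) i i := by
  have hii : 0 ≤ (A * (Q - c • diagonal d) * Aᵀ) i i := hM.diag_nonneg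
  rw [Matrix.mul_sub, Matrix.sub_mul, Matrix.mul_smul, Matrix.smul_mul, Matrix.sub_apply,
    Matrix.smul_apply, smul_eq_mul] at hii
  nlinarith [le_mul_diagonal_mul_transpose_apply_self A hd i]

end DiagonalEntries

theorem Real.rpow_two_div_three_le_of_mul_rpow_le {c L x : ℝ} (hc : 0 ≤ c) (hx : 0 < x)
    (h : c * x ^ (-(3 : ℝ) / 2) ≤ L) : (c / L) ^ ((2 : ℝ) / 3) ≤ x := by
  rcases hc.eq_or_lt with rfl | hc
  · simp [Real.zero_rpow, hx.le]
  have hx32 : 0 < x ^ ((3 : ℝ) / 2) := Real.rpow_pos_of_pos hx _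
  have hneg : x ^ (-(3 : ℝ) / 2) = (x ^ ((3 : ℝ) / 2))⁻¹ := by
    rw [neg_div, Real.rpow_neg hx.le]
  rw [hneg, ← div_eq_mul_inv, div_le_iff₀ hx32] at h
  have hL : 0 < L := pos_of_mul_pos_left (hc.trans_le h) hx32.le
  have hcL : c / L ≤ x ^ ((3 : ℝ) / 2) := by rwa [div_le_iff₀ hL, mul_comm]
  have htwo : (2 : ℝ) / 3 = ((3 : ℝ) / 2)⁻¹ := by norm_num
  rw [htwo, Real.rpow_inv_le_iff_of_pos (by positivity) hx.le (by norm_num)]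
  exact hcL

theorem second_order_KKT_entry_lower_bound_general (K : ℕ)
    (Q : Matrix (Fin K) (Fin K) ℝ)
    (lam : ℝ) (hlam : 0 < lam)
    (x : Fin K → ℝ) (hx : ∀ i, 0 < x i)
    (P : Matrix (Fin K) (Fin K) ℝ)
    (hP : P = 1 - (K : ℝ)⁻¹ • Matrix.of (fun _ _ => 1))
    (hsoc : (P * (Q - (lam / 4) • Matrix.diagonal (fun i => (x i) ^ (-(3 : ℝ) / 2))) * P).PosSemidef)
    (L : Fin K → ℝ) (hL : ∀ i, L i = (P * Q * P) i i)
    (i : Fin K) :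
    (lam * ((K : ℝ) - 1) ^ 2 / (4 * L i * (K : ℝ) ^ 2)) ^ ((2 : ℝ) / 3) ≤ x i := by
  have hPT : Pᵀ = P := by
    subst hP
    ext a b
    simp [one_apply, eq_comm]
  have hK : (K : ℝ) ≠ 0 := Nat.cast_ne_zero.mpr (Fin.pos i).ne'
  have hPii : P i i = ((K : ℝ) - 1) / K := by simp [hP, sub_div, hK]
  have hsoc' :
      (P * (Q - (lam / 4) • diagonal (fun j => x j ^ (-(3 : ℝ) / 2))) * Pᵀ).PosSemidef := by
    rwa [hPT]
  have hbound : lam / 4 * (((K : ℝ) - 1) / K) ^ 2 * x i ^ (-(3 : ℝ) / 2) ≤ L i := by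
    have := le_mul_mul_transpose_apply_self_of_posSemidef_sub_smul_diagonal (by positivity)
      (fun j => (Real.rpow_pos_of_pos (hx j) _).le) hsoc' i
    rw [hPT, ← hL, hPii] at this
    linarith
  convert Real.rpow_two_div_three_le_of_mul_rpow_le (by positivity) (hx i) hbound using 2
  field_simp

theorem second_order_KKT_entry_lower_bound (K : ℕ) (hK : 2 ≤ K)
    (Q : Matrix (Fin K) (Fin K) ℝ) (hQsymm : Q.IsSymm)
    (lam : ℝ) (hlam : 0 < lam)
    (x : Fin K → ℝ) (hx : ∀ i, 0 < x i) (hsum : ∑ i, x i = 1)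
    (P : Matrix (Fin K) (Fin K) ℝ)
    (hP : P = 1 - (K : ℝ)⁻¹ • Matrix.of (fun _ _ => 1))
    (hsoc : (P * (Q - (lam / 4) • Matrix.diagonal (fun i => (x i) ^ (-(3 : ℝ) / 2))) * P).PosSemidef)
    (L : Fin K → ℝ) (hL : ∀ i, L i = (P * Q * P) i i)
    (hLpos : ∀ i, 0 < L i) (i : Fin K) :
    (lam * ((K : ℝ) - 1) ^ 2 / (4 * L i * (K : ℝ) ^ 2)) ^ ((2 : ℝ) / 3) ≤ x i :=
  second_order_KKT_entry_lower_bound_general K Q lam hlam x hx P hP hsoc L hL i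
end

section
/- Let (x̄⁺, x̄⁻) be a first-order KKT point of the problem min (1/2)(x⁺ − x⁻)^T Q (x⁺ − x⁻) − c^T(x⁺ − x⁻) + λ∑(x⁺_j)^{1/2} + λ∑(x⁻_j)^{1/2} subject to e^T x⁺ − e^T x⁻ = 1, e^T x⁺ + e^T x⁻ ≤ δ, x⁺ ≥ 0, x⁻ ≥ 0, with λ > 0 and the multiplier λ₂ ≤ 0 for the inequality constraint. Then x̄⁺ and x̄⁻ have disjoint supports: x̄⁺_j · x̄⁻_j = 0 for all j. -/
/-! On a coordinate where both `xp` and `xm` were positive, both stationarity equations would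
hold; the smooth parts of the two gradients cancel, leaving a sum of two positive penalty
derivatives `λ / (2√t)` equal to `2 λ₂ ≤ 0`. -/

open Matrix

section

variable {ι : Type*} [Fintype ι]

theorem mulVec_sub_swap_apply (Q : Matrix ι ι ℝ) (x y : ι → ℝ) (i : ι) :
    (Q *ᵥ (y - x)) i = -(Q *ᵥ (x - y)) i := by
  rw [← neg_sub, mulVec_neg, Pi.neg_apply]

theorem kkt_split_add_eq {Q : Matrix ι ι ℝ} {c xp xm : ι → ℝ} {lam lam1 lam2 : ℝ} {i : ι}
    (hp : (Q *ᵥ (xp - xm)) i - c i + lam / (2 * √(xp i)) - lam1 - lam2 = 0)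
    (hm : (Q *ᵥ (xm - xp)) i + c i + lam / (2 * √(xm i)) + lam1 - lam2 = 0) :
    lam / (2 * √(xp i)) + lam / (2 * √(xm i)) = 2 * lam2 := by
  rw [mulVec_sub_swap_apply] at hm
  linarith

end

theorem l1_ball_lp_disjoint_supports_general (n : ℕ)
    (Q : Matrix (Fin n) (Fin n) ℝ) (c : Fin n → ℝ)
    (lam : ℝ) (hlam : 0 < lam)
    (lam1 lam2 : ℝ) (hlam2 : lam2 ≤ 0)
    (xp xm : Fin n → ℝ) (hxp : ∀ i, 0 ≤ xp i) (hxm : ∀ i, 0 ≤ xm i)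
    (hKKTp : ∀ i, 0 < xp i →
      (Q *ᵥ (xp - xm)) i - c i + lam / (2 * Real.sqrt (xp i)) - lam1 - lam2 = 0)
    (hKKTm : ∀ i, 0 < xm i →
      (Q *ᵥ (xm - xp)) i + c i + lam / (2 * Real.sqrt (xm i)) + lam1 - lam2 = 0) :
    ∀ j, xp j * xm j = 0 := by
  intro j
  by_contra hne
  have hp : 0 < xp j := (hxp j).lt_of_ne' (left_ne_zero_of_mul hne)
  have hm : 0 < xm j := (hxm j).lt_of_ne' (right_ne_zero_of_mul hne)
  have hsum := kkt_split_add_eq (hKKTp j hp) (hKKTm j hm)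
  have hp_pen : 0 < lam / (2 * √(xp j)) := by positivity
  have hm_pen : 0 < lam / (2 * √(xm j)) := by positivity
  linarith

theorem l1_ball_lp_disjoint_supports (n : ℕ)
    (Q : Matrix (Fin n) (Fin n) ℝ) (c : Fin n → ℝ)
    (lam : ℝ) (hlam : 0 < lam)
    (lam1 lam2 : ℝ) (hlam2 : lam2 ≤ 0) (delta : ℝ)
    (xp xm : Fin n → ℝ) (hxp : ∀ i, 0 ≤ xp i) (hxm : ∀ i, 0 ≤ xm i)
    (hbudget : (∑ i, xp i) - (∑ i, xm i) = 1)
    (hl1 : (∑ i, xp i) + (∑ i, xm i) ≤ delta)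
    (hKKTp : ∀ i, 0 < xp i →
      (Q *ᵥ (xp - xm)) i - c i + lam / (2 * Real.sqrt (xp i)) - lam1 - lam2 = 0)
    (hKKTm : ∀ i, 0 < xm i →
      (Q *ᵥ (xm - xp)) i + c i + lam / (2 * Real.sqrt (xm i)) + lam1 - lam2 = 0) :
    ∀ j, xp j * xm j = 0 :=
  l1_ball_lp_disjoint_supports_general n Q c lam hlam lam1 lam2 hlam2 xp xm hxp hxm hKKTp hKKTm
end

section
/- Let (x̄⁺, x̄⁻) be a first-order KKT point of min (1/2)(x⁺ − x⁻)^T Q (x⁺ − x⁻) − c^T(x⁺ − x⁻) + λ∑(x⁺_j)^{1/2} + λ∑(x⁻_j)^{1/2} + μ‖x⁺ − x⁻‖₂² subject to e^T x⁺ − e^T x⁻ = 1, x⁺ ≥ 0, x⁻ ≥ 0, with λ > 0 and μ ≥ 0. Then x̄⁺_j · x̄⁻_j = 0 for all j. -/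
open Matrix

/-! Where both `xp j` and `xm j` are positive, the smooth terms of the two stationarity equations
cancel, so their sum reads `lam / (2 √(xp j)) + lam / (2 √(xm j)) = 0`, impossible for `lam > 0`. -/

theorem Matrix.mulVec_sub_swap {m n R : Type*} [Fintype n] [Ring R]
    (Q : Matrix m n R) (x y : n → R) : Q *ᵥ (y - x) = -(Q *ᵥ (x - y)) := by
  rw [← neg_sub, mulVec_neg]

theorem l2_lp_disjoint_supports_general (n : ℕ)
    (Q : Matrix (Fin n) (Fin n) ℝ) (c : Fin n → ℝ)
    (lam : ℝ) (hlam : 0 < lam) (mu : ℝ) (lam1 : ℝ)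
    (xp xm : Fin n → ℝ) (hxp : ∀ i, 0 ≤ xp i) (hxm : ∀ i, 0 ≤ xm i)
    (hKKTp : ∀ i, 0 < xp i →
      (Q *ᵥ (xp - xm)) i - c i + lam / (2 * Real.sqrt (xp i))
        + 2 * mu * (xp i - xm i) - lam1 = 0)
    (hKKTm : ∀ i, 0 < xm i →
      (Q *ᵥ (xm - xp)) i + c i + lam / (2 * Real.sqrt (xm i))
        - 2 * mu * (xp i - xm i) + lam1 = 0) :
    ∀ j, xp j * xm j = 0 := by
  intro j
  by_contra h
  have hp : 0 < xp j := (hxp j).lt_of_ne' (left_ne_zero_of_mul h)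
  have hm : 0 < xm j := (hxm j).lt_of_ne' (right_ne_zero_of_mul h)
  have hstat_p := hKKTp j hp
  have hstat_m := hKKTm j hm
  rw [mulVec_sub_swap, Pi.neg_apply] at hstat_m
  have hpen_p : 0 < lam / (2 * Real.sqrt (xp j)) := by positivity
  have hpen_m : 0 < lam / (2 * Real.sqrt (xm j)) := by positivity
  linarith

theorem l2_lp_disjoint_supports (n : ℕ)
    (Q : Matrix (Fin n) (Fin n) ℝ) (c : Fin n → ℝ)
    (lam : ℝ) (hlam : 0 < lam) (mu : ℝ) (hmu : 0 ≤ mu) (lam1 : ℝ)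
    (xp xm : Fin n → ℝ) (hxp : ∀ i, 0 ≤ xp i) (hxm : ∀ i, 0 ≤ xm i)
    (hbudget : (∑ i, xp i) - (∑ i, xm i) = 1)
    (hKKTp : ∀ i, 0 < xp i →
      (Q *ᵥ (xp - xm)) i - c i + lam / (2 * Real.sqrt (xp i))
        + 2 * mu * (xp i - xm i) - lam1 = 0)
    (hKKTm : ∀ i, 0 < xm i →
      (Q *ᵥ (xm - xp)) i + c i + lam / (2 * Real.sqrt (xm i))
        - 2 * mu * (xp i - xm i) + lam1 = 0) :
    ∀ j, xp j * xm j = 0 :=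
  l2_lp_disjoint_supports_general n Q c lam hlam mu lam1 xp xm hxp hxm hKKTp hKKTm
end

section
/- Let x ∈ ℝ^K with x_i > 0, ∑ x_j = 1, and K ≥ 2. Set d = e^i − e^0 where e^0 = (1/K)e, and x' = x − (K x_i/(K−1)) d. Then e^T x' = 1, x'_i = 0, x'_j ≥ 0 for all j, and for f(x) = (1/2)x^T Q x − φ m^T x: f(x') − f(x) = −(K/(K−1)) x_i f'(x; d) + (1/2)(K/(K−1))² x_i² L_i, where f'(x; d) = (Qx)^T d − φ(m_i − m̄) and L_i = d^T Q d. -/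
/-!
Removing stock `i` moves `x` along the cost-neutral direction `d = eⁱ - e/K`, whose entries sum
to zero, so the budget constraint survives. The step length `K xᵢ / (K - 1)` is the one that
zeroes coordinate `i`, while every other coordinate grows by `xᵢ / (K - 1)`. Since the objective
is quadratic, its second-order Taylor expansion along `d` is exact.
-/

open Matrix

theorem Matrix.dotProduct_mulVec_add_smul {R n : Type*} [CommRing R] [Fintype n]
    {Q : Matrix n n R} (hQ : Q.IsSymm) (x d : n → R) (t : R) :
    (x + t • d) ⬝ᵥ Q *ᵥ (x + t • d)
      = x ⬝ᵥ Q *ᵥ x + 2 * t * ((Q *ᵥ x) ⬝ᵥ d) + t ^ 2 * (d ⬝ᵥ Q *ᵥ d) := by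
  have hxd : x ⬝ᵥ Q *ᵥ d = (Q *ᵥ x) ⬝ᵥ d := by
    rw [dotProduct_mulVec, ← mulVec_transpose, hQ.eq]
  simp only [mulVec_add, mulVec_smul, add_dotProduct, dotProduct_add, smul_dotProduct,
    dotProduct_smul, smul_eq_mul, dotProduct_comm d (Q *ᵥ x), hxd]
  ring

theorem quadratic_objective_add_smul_sub {n : Type*} [Fintype n] {Q : Matrix n n ℝ}
    (hQ : Q.IsSymm) {phi : ℝ} {m : n → ℝ} {f : (n → ℝ) → ℝ}
    (hf : ∀ z, f z = (1 / 2) * (z ⬝ᵥ Q *ᵥ z) - phi * (m ⬝ᵥ z)) (x d : n → ℝ) (t : ℝ) :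
    f (x + t • d) - f x
      = t * ((Q *ᵥ x) ⬝ᵥ d - phi * (m ⬝ᵥ d)) + (1 / 2) * t ^ 2 * (d ⬝ᵥ Q *ᵥ d) := by
  rw [hf, hf, dotProduct_mulVec_add_smul hQ, dotProduct_add, dotProduct_smul, smul_eq_mul]
  ring

section CostNeutral

variable {ι : Type*} [Fintype ι] [DecidableEq ι]

/-- The paper's `eⁱ - e⁰`, with `e⁰ = e / K`. -/
noncomputable def costNeutralDir (i : ι) : ι → ℝ :=
  Pi.single i 1 - fun _ => (Fintype.card ι : ℝ)⁻¹

theorem costNeutralDir_apply_self (i : ι) :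
    costNeutralDir i i = 1 - (Fintype.card ι : ℝ)⁻¹ := by
  simp [costNeutralDir]

theorem costNeutralDir_apply_of_ne {i j : ι} (h : j ≠ i) :
    costNeutralDir i j = -(Fintype.card ι : ℝ)⁻¹ := by
  simp [costNeutralDir, h]

theorem dotProduct_costNeutralDir (v : ι → ℝ) (i : ι) :
    v ⬝ᵥ costNeutralDir i = v i - (Fintype.card ι : ℝ)⁻¹ * ∑ j, v j := by
  rw [costNeutralDir, dotProduct_sub, dotProduct_single, mul_one, dotProduct, Finset.mul_sum]
  simp only [mul_comm]

theorem sum_costNeutralDir (i : ι) : ∑ j, costNeutralDir i j = 0 := by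
  have hcard : (Fintype.card ι : ℝ) ≠ 0 := by
    exact_mod_cast (Fintype.card_pos_iff.mpr ⟨i⟩).ne'
  simpa [dotProduct, hcard] using dotProduct_costNeutralDir (fun _ => (1 : ℝ)) i

noncomputable def removalStep (x : ι → ℝ) (i : ι) : ℝ :=
  (Fintype.card ι : ℝ) * x i / ((Fintype.card ι : ℝ) - 1)

theorem sub_removalStep_smul_apply_self {x : ι → ℝ} {i : ι}
    (hcard : 1 < Fintype.card ι) :
    (x - removalStep x i • costNeutralDir i) i = 0 := by
  have hK : (1 : ℝ) < Fintype.card ι := by exact_mod_cast hcard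
  simp only [Pi.sub_apply, Pi.smul_apply, smul_eq_mul, costNeutralDir_apply_self, removalStep]
  field_simp [sub_ne_zero.mpr hK.ne']
  ring

theorem sub_removalStep_smul_apply_of_ne {x : ι → ℝ} {i j : ι} (h : j ≠ i) :
    (x - removalStep x i • costNeutralDir i) j
      = x j + x i / ((Fintype.card ι : ℝ) - 1) := by
  have hcard : (Fintype.card ι : ℝ) ≠ 0 := by
    exact_mod_cast (Fintype.card_pos_iff.mpr ⟨i⟩).ne'
  simp only [Pi.sub_apply, Pi.smul_apply, smul_eq_mul, costNeutralDir_apply_of_ne h, removalStep]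
  field_simp
  ring

end CostNeutral

theorem marginal_cost_of_sparsity (K : ℕ) (hK : 2 ≤ K)
    (Q : Matrix (Fin K) (Fin K) ℝ) (hQsymm : Q.IsSymm)
    (phi : ℝ) (m : Fin K → ℝ) (i : Fin K)
    (x : Fin K → ℝ) (hx : ∀ j, 0 < x j) (hsum : ∑ j, x j = 1)
    (f : (Fin K → ℝ) → ℝ)
    (hf : ∀ z, f z = (1 / 2) * (z ⬝ᵥ Q *ᵥ z) - phi * (m ⬝ᵥ z))
    (d : Fin K → ℝ) (hd : d = Pi.single i 1 - fun _ => (K : ℝ)⁻¹)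
    (mbar : ℝ) (hmbar : mbar = (K : ℝ)⁻¹ * ∑ j, m j)
    (L : ℝ) (hL : L = d ⬝ᵥ Q *ᵥ d)
    (fd : ℝ) (hfd : fd = (Q *ᵥ x) ⬝ᵥ d - phi * (m i - mbar))
    (x' : Fin K → ℝ) (hx' : x' = x - ((K : ℝ) * x i / ((K : ℝ) - 1)) • d) :
    (∑ j, x' j = 1) ∧ x' i = 0 ∧ (∀ j, 0 ≤ x' j) ∧
      f x' - f x
        = -((K : ℝ) / ((K : ℝ) - 1)) * x i * fd
            + (1 / 2) * ((K : ℝ) / ((K : ℝ) - 1)) ^ 2 * (x i) ^ 2 * L := by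
  have hd' : d = costNeutralDir i := by rw [hd, costNeutralDir, Fintype.card_fin]
  have hx'' : x' = x - removalStep x i • d := by rw [hx', removalStep, Fintype.card_fin]
  have hcard : 1 < Fintype.card (Fin K) := by rw [Fintype.card_fin]; omega
  refine ⟨?_, ?_, fun j => ?_, ?_⟩
  · simp [hx'', Finset.sum_sub_distrib, ← Finset.mul_sum, hd', sum_costNeutralDir, hsum]
  · rw [hx'', hd', sub_removalStep_smul_apply_self hcard]
  · rcases eq_or_ne j i with rfl | hji
    · rw [hx'', hd', sub_removalStep_smul_apply_self hcard]
    · have hK1 : (0 : ℝ) < K - 1 := by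
        rw [sub_pos]; exact_mod_cast hK
      rw [hx'', hd', sub_removalStep_smul_apply_of_ne hji, Fintype.card_fin]
      exact add_nonneg (hx j).le (div_nonneg (hx i).le hK1.le)
  · have hmd : m ⬝ᵥ d = m i - mbar := by
      rw [hd', dotProduct_costNeutralDir, Fintype.card_fin, hmbar]
    rw [hx', sub_eq_add_neg x, ← neg_smul, quadratic_objective_add_smul_sub hQsymm hf, hmd,
      ← hL, ← hfd]
    ring
end

section
/- Suppose d̃ ∈ ℝ^n, μ ≥ 0, and a symmetric matrix Q̃ satisfy: (Q̃ + μI) d̃ = −c̃ + B^T y for some y (with B d̃ = 0), and N^T Q̃ N + μI ⪰ 0 where the columns of N form an orthonormal basis of ker(B) containing d̃ = N v. Then (1/2) d̃^T Q̃ d̃ + c̃^T d̃ ≤ −(μ/2)‖d̃‖². -/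
/-!
Pairing the stationarity condition with `d̃` kills the multiplier term, since `B d̃ = 0`, and gives
`c̃ᵀd̃ = -d̃ᵀQ̃d̃ - μ‖d̃‖²`; hence the model value is `-½ d̃ᵀQ̃d̃ - μ‖d̃‖²`. Writing `d̃ = N v` with
`NᵀN = I`, we get `d̃ᵀQ̃d̃ = vᵀ(NᵀQ̃N)v ≥ -μ‖v‖² = -μ‖d̃‖²` by the reduced positive semidefiniteness.
-/

open Matrix

namespace Matrix

variable {R m n l : Type*} [Fintype m] [Fintype n]

theorem dotProduct_mulVec_eq_of_stationary [CommRing R] [DecidableEq n] {Q : Matrix n n R}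
    {B : Matrix m n R} {c d : n → R} {y : m → R} {μ : R}
    (hstat : (Q + μ • 1) *ᵥ d = -c + Bᵀ *ᵥ y) (hker : B *ᵥ d = 0) :
    c ⬝ᵥ d = -(d ⬝ᵥ Q *ᵥ d) - μ * (d ⬝ᵥ d) := by
  have hpair := congrArg (d ⬝ᵥ ·) hstat
  simp only [add_mulVec, smul_mulVec, one_mulVec, dotProduct_add, dotProduct_smul, smul_eq_mul,
    dotProduct_neg, dotProduct_transpose_mulVec, hker, dotProduct_zero, add_zero] at hpair
  rw [dotProduct_comm c]
  linear_combination hpair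

theorem mulVec_dotProduct_mulVec_of_transpose_mul_self [CommSemiring R] [Fintype l]
    [DecidableEq l] {N : Matrix n l R} (hN : Nᵀ * N = 1) (v : l → R) :
    N *ᵥ v ⬝ᵥ N *ᵥ v = v ⬝ᵥ v := by
  rw [dotProduct_mulVec, vecMul_mulVec, hN, vecMul_one]

theorem mulVec_dotProduct_mulVec_mulVec [CommSemiring R] [Fintype l] (Q : Matrix n n R)
    (N : Matrix n l R) (v : l → R) :
    N *ᵥ v ⬝ᵥ Q *ᵥ N *ᵥ v = v ⬝ᵥ (Nᵀ * Q * N) *ᵥ v := by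
  rw [dotProduct_mulVec, vecMul_mulVec, ← dotProduct_mulVec, mulVec_mulVec]

theorem PosSemidef.neg_mul_dotProduct_self_le [CommRing R] [PartialOrder R] [StarRing R]
    [TrivialStar R] [IsOrderedAddMonoid R] [DecidableEq n] {A : Matrix n n R} {μ : R}
    (hA : (A + μ • 1).PosSemidef) (v : n → R) :
    -μ * (v ⬝ᵥ v) ≤ v ⬝ᵥ A *ᵥ v := by
  have hnonneg := hA.dotProduct_mulVec_nonneg v
  rw [star_trivial, add_mulVec, smul_mulVec, one_mulVec, dotProduct_add, dotProduct_smul,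
    smul_eq_mul] at hnonneg
  rwa [neg_mul, neg_le_iff_add_nonneg]

end Matrix

theorem trust_region_descent_inequality_general (n k p : ℕ)
    (Qt : Matrix (Fin n) (Fin n) ℝ)
    (B : Matrix (Fin p) (Fin n) ℝ) (ct dt : Fin n → ℝ) (y : Fin p → ℝ)
    (mu : ℝ)
    (hstat : (Qt + mu • 1) *ᵥ dt = -ct + Bᵀ *ᵥ y)
    (hker : B *ᵥ dt = 0)
    (N : Matrix (Fin n) (Fin k) ℝ) (hortho : Nᵀ * N = 1)
    (v : Fin k → ℝ) (hv : dt = N *ᵥ v)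
    (hpsd : (Nᵀ * Qt * N + mu • 1).PosSemidef) :
    (1 / 2) * (dt ⬝ᵥ Qt *ᵥ dt) + ct ⬝ᵥ dt ≤ -(mu / 2) * (dt ⬝ᵥ dt) := by
  have hreduced : -mu * (dt ⬝ᵥ dt) ≤ dt ⬝ᵥ Qt *ᵥ dt := by
    rw [hv, mulVec_dotProduct_mulVec_of_transpose_mul_self hortho,
      mulVec_dotProduct_mulVec_mulVec]
    exact hpsd.neg_mul_dotProduct_self_le v
  rw [dotProduct_mulVec_eq_of_stationary hstat hker]
  linarith

theorem trust_region_descent_inequality (n k p : ℕ)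
    (Qt : Matrix (Fin n) (Fin n) ℝ) (hQt : Qt.IsSymm)
    (B : Matrix (Fin p) (Fin n) ℝ) (ct dt : Fin n → ℝ) (y : Fin p → ℝ)
    (mu : ℝ) (hmu : 0 ≤ mu)
    (hstat : (Qt + mu • 1) *ᵥ dt = -ct + Bᵀ *ᵥ y)
    (hker : B *ᵥ dt = 0)
    (N : Matrix (Fin n) (Fin k) ℝ) (hortho : Nᵀ * N = 1)
    (hNker : ∀ z : Fin k → ℝ, B *ᵥ (N *ᵥ z) = 0)
    (v : Fin k → ℝ) (hv : dt = N *ᵥ v)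
    (hpsd : (Nᵀ * Qt * N + mu • 1).PosSemidef) :
    (1 / 2) * (dt ⬝ᵥ Qt *ᵥ dt) + ct ⬝ᵥ dt ≤ -(mu / 2) * (dt ⬝ᵥ dt) :=
  trust_region_descent_inequality_general n k p Qt B ct dt y mu hstat hker N hortho v hv hpsd
end
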